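/- arXiv:1201.3266 — 6 statements merged into one kernel-verified Lean document; each statement's English description precedes it below -/
import Mathlib

section
/- Let V be a finite-dimensional real vector space, T : V × V × V → ℝ a symmetric trilinear form, ν : V → ℝ a linear form, and ξ a quadratic form on V with associated symmetric bilinear form B, such that T(x,x,x) = ν(x)·ξ(x) for all x ∈ V. Suppose there exists ω ∈ V such that the bilinear form (y,z) ↦ T(ω,y,z) is nondegenerate. Then there is no nonzero v ∈ V with ν(v) = 0 and B(v,y) = 0 for all y ∈ V; in particular the radical of ξ has dimension at most 1. -/
/-- If a symmetric trilinear form `T` factors as `T(x,x,x) = ν(x)·ξ(x)` with `ν` linear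
and `ξ` quadratic with associated symmetric bilinear form `B`, and `T(ω,·,·)` is
nondegenerate for some `ω`, then no nonzero `v` satisfies `ν(v) = 0` and `B(v,·) = 0`;
in particular the radical of `ξ` has dimension at most `1`. -/
theorem radical_dim_le_one {V : Type*} [AddCommGroup V] [Module ℝ V]
    [FiniteDimensional ℝ V]
    (T : V →ₗ[ℝ] V →ₗ[ℝ] V →ₗ[ℝ] ℝ)
    (hTsymm1 : ∀ x y z : V, T x y z = T y x z)
    (hTsymm2 : ∀ x y z : V, T x y z = T x z y)
    (ν : V →ₗ[ℝ] ℝ) (ξ : QuadraticForm ℝ V) (B : LinearMap.BilinForm ℝ V)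
    (hBsymm : ∀ x y : V, B x y = B y x)
    (hBξ : ∀ x : V, B x x = ξ x)
    (hfact : ∀ x : V, T x x x = ν x * ξ x)
    (ω : V) (hω : ∀ v : V, (∀ y : V, T ω v y = 0) → v = 0) :
    (¬ ∃ v : V, v ≠ 0 ∧ ν v = 0 ∧ ∀ y : V, B v y = 0) ∧
      Module.finrank ℝ (LinearMap.ker B) ≤ 1 := by
  -- key claim: any v with ν v = 0 and B v · = 0 is zero
  have key : ∀ v : V, ν v = 0 → (∀ y : V, B v y = 0) → v = 0 := by
    intro v hνv hBv
    have hBv' : ∀ y : V, B y v = 0 := fun y => (hBsymm y v).trans (hBv y)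
    have hξa : ∀ x : V, ξ (x + v) = ξ x := by
      intro x
      rw [← hBξ, ← hBξ]
      simp [hBv, hBv']
    have hξs : ∀ x : V, ξ (x - v) = ξ x := by
      intro x
      rw [← hBξ, ← hBξ]
      simp [map_sub, LinearMap.sub_apply, hBv, hBv']
    have hTvvv : T v v v = 0 := by
      rw [hfact v, hνv]; ring
    have hTxxv : ∀ x : V, T x x v = 0 := by
      intro x
      have h1 := hfact (x + v)
      have h2 := hfact (x - v)
      rw [hξa x, map_add ν x v, hνv, add_zero] at h1
      rw [hξs x, map_sub ν x v, hνv, sub_zero] at h2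
      have e1 : T v x x = T x x v := (hTsymm1 v x x).trans (hTsymm2 x v x)
      have e2 : T x v x = T x x v := hTsymm2 x v x
      have e3 : T v x v = T x v v := hTsymm1 v x v
      have e4 : T v v x = T x v v := (hTsymm2 v v x).trans (hTsymm1 v x v)
      simp only [map_add, map_sub, LinearMap.add_apply, LinearMap.sub_apply] at h1 h2
      rw [e1, e2, e3, e4] at h1 h2
      have h0 := hfact x
      linarith
    have hTxyv : ∀ x y : V, T x y v = 0 := by
      intro x y
      have h := hTxxv (x + y)
      simp only [map_add, LinearMap.add_apply] at h
      rw [hTxxv x, hTxxv y, hTsymm1 y x v] at h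
      linarith
    exact hω v (fun y => (hTsymm2 ω v y).trans (hTxyv ω y))
  constructor
  · rintro ⟨v, hv0, hνv, hBv⟩
    exact hv0 (key v hνv hBv)
  · -- ν restricted to ker B is injective
    have hinj : Function.Injective (ν.domRestrict (LinearMap.ker B)) := by
      rw [← LinearMap.ker_eq_bot, LinearMap.ker_eq_bot']
      intro m hm
      have hmB : ∀ y : V, B (m : V) y = 0 := by
        intro y
        have : B (m : V) = 0 := LinearMap.mem_ker.mp m.2
        rw [this]; rfl
      have : (m : V) = 0 := key m hm hmB
      exact Subtype.ext this
    calc Module.finrank ℝ (LinearMap.ker B)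
        ≤ Module.finrank ℝ ℝ := LinearMap.finrank_le_finrank_of_injective hinj
      _ = 1 := Module.finrank_self ℝ
end

section
/- Let V be a finite-dimensional real vector space, T : V × V × V → ℝ a symmetric trilinear form, ν : V → ℝ a linear form, and ξ a quadratic form on V with associated symmetric bilinear form B, such that T(x,x,x) = ν(x)·ξ(x) for all x ∈ V. Suppose there exists ω ∈ V such that the bilinear form (y,z) ↦ T(ω,y,z) is nondegenerate, and suppose ξ is degenerate, i.e. there exists a nonzero v ∈ V with B(v,y) = 0 for all y ∈ V. Then the restriction of B to the hyperplane ker ν = {x ∈ V : ν(x) = 0} is nondegenerate: if w ∈ ker ν satisfies B(w,u) = 0 for every u ∈ ker ν, then w = 0. -/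
/-!
Polarizing `T(x,x,x) = ν(x) B(x,x)` gives `3 T(x,y,z) = ν(x) B(y,z) + ν(y) B(x,z) + ν(z) B(x,y)`.
Hence a vector in the radical of `B` that also lies in `ker ν` is killed by `T(ω,·,·)`, so it is
zero. In particular the nonzero radical vector `v` has `ν v ≠ 0`, so `V = ker ν ⊕ ℝ v`; a vector
of `ker ν` orthogonal to `ker ν` is then orthogonal to everything, i.e. radical, hence zero.
-/

theorem trilinear_polarization {K V : Type*} [Field K] [CharZero K] [AddCommGroup V]
    [Module K V] {T : V →ₗ[K] V →ₗ[K] V →ₗ[K] K} (hT₁ : ∀ x y z, T x y z = T y x z)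
    (hT₂ : ∀ x y z, T x y z = T x z y) {ν : V →ₗ[K] K} {B : LinearMap.BilinForm K V}
    (hB : ∀ x y, B x y = B y x) (hcube : ∀ x, T x x x = ν x * B x x) (x y z : V) :
    3 * T x y z = ν x * B y z + ν y * B x z + ν z * B x y := by
  have hxyz := hcube (x + y + z)
  have hxy := hcube (x + y)
  have hxz := hcube (x + z)
  have hyz := hcube (y + z)
  simp only [map_add, LinearMap.add_apply] at hxyz hxy hxz hyz
  simp only [hT₁, hT₂, hB] at hxyz hxy hxz hyz ⊢
  linear_combination (hxyz - hxy - hxz - hyz + hcube x + hcube y + hcube z) / 2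

theorem eq_zero_of_mem_radical_of_mem_ker {K V : Type*} [Field K] [CharZero K]
    [AddCommGroup V] [Module K V] {T : V →ₗ[K] V →ₗ[K] V →ₗ[K] K} {ν : V →ₗ[K] K}
    {B : LinearMap.BilinForm K V}
    (hpol : ∀ x y z, 3 * T x y z = ν x * B y z + ν y * B x z + ν z * B x y)
    (hB : ∀ x y, B x y = B y x) {ω : V} (hω : ∀ v, (∀ y, T ω v y = 0) → v = 0) {r : V}
    (hr : ∀ y, B r y = 0) (hνr : ν r = 0) : r = 0 := by
  refine hω r fun y => ?_
  have h := hpol ω r y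
  rw [hr, hνr, hB ω r, hr] at h
  simpa using h

theorem LinearMap.BilinForm.apply_eq_zero_of_forall_mem_ker {K V : Type*} [Field K]
    [AddCommGroup V] [Module K V] {B : LinearMap.BilinForm K V} {ν : V →ₗ[K] K} {v w : V}
    (hνv : ν v ≠ 0) (hker : ∀ u, ν u = 0 → B w u = 0) (hwv : B w v = 0) (y : V) :
    B w y = 0 := by
  set c := ν y / ν v
  have hy : y = (y - c • v) + c • v := by abel
  have hνy : ν (y - c • v) = 0 := by
    rw [map_sub, map_smul, smul_eq_mul, div_mul_cancel₀ _ hνv, sub_self]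
  rw [hy, map_add, map_smul, hker _ hνy, hwv, smul_zero, add_zero]

theorem restriction_nondegenerate_general {V : Type*} [AddCommGroup V] [Module ℝ V]
    (T : V →ₗ[ℝ] V →ₗ[ℝ] V →ₗ[ℝ] ℝ)
    (hTsymm1 : ∀ x y z : V, T x y z = T y x z)
    (hTsymm2 : ∀ x y z : V, T x y z = T x z y)
    (ν : V →ₗ[ℝ] ℝ) (ξ : QuadraticForm ℝ V) (B : LinearMap.BilinForm ℝ V)
    (hBsymm : ∀ x y : V, B x y = B y x)
    (hBξ : ∀ x : V, B x x = ξ x)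
    (hfact : ∀ x : V, T x x x = ν x * ξ x)
    (ω : V) (hω : ∀ v : V, (∀ y : V, T ω v y = 0) → v = 0)
    (v : V) (hv0 : v ≠ 0) (hvrad : ∀ y : V, B v y = 0) :
    ∀ w : V, ν w = 0 → (∀ u : V, ν u = 0 → B w u = 0) → w = 0 := by
  have hpol := trilinear_polarization hTsymm1 hTsymm2 hBsymm fun x => by rw [hfact, hBξ]
  have hνv : ν v ≠ 0 := fun h => hv0 (eq_zero_of_mem_radical_of_mem_ker hpol hBsymm hω hvrad h)
  intro w hw hker
  have hwv : B w v = 0 := by rw [hBsymm]; exact hvrad w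
  exact eq_zero_of_mem_radical_of_mem_ker hpol hBsymm hω
    (LinearMap.BilinForm.apply_eq_zero_of_forall_mem_ker hνv hker hwv) hw

/-- If a symmetric trilinear form `T` factors as `T(x,x,x) = ν(x)·ξ(x)`, the bilinear
form `T(ω,·,·)` is nondegenerate for some `ω`, and the quadratic form `ξ` (with
associated symmetric bilinear form `B`) is degenerate, then the restriction of `B`
to the hyperplane `ker ν` is nondegenerate. -/
theorem restriction_nondegenerate {V : Type*} [AddCommGroup V] [Module ℝ V]
    [FiniteDimensional ℝ V]
    (T : V →ₗ[ℝ] V →ₗ[ℝ] V →ₗ[ℝ] ℝ)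
    (hTsymm1 : ∀ x y z : V, T x y z = T y x z)
    (hTsymm2 : ∀ x y z : V, T x y z = T x z y)
    (ν : V →ₗ[ℝ] ℝ) (ξ : QuadraticForm ℝ V) (B : LinearMap.BilinForm ℝ V)
    (hBsymm : ∀ x y : V, B x y = B y x)
    (hBξ : ∀ x : V, B x x = ξ x)
    (hfact : ∀ x : V, T x x x = ν x * ξ x)
    (ω : V) (hω : ∀ v : V, (∀ y : V, T ω v y = 0) → v = 0)
    (v : V) (hv0 : v ≠ 0) (hvrad : ∀ y : V, B v y = 0) :
    ∀ w : V, ν w = 0 → (∀ u : V, ν u = 0 → B w u = 0) → w = 0 :=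
  restriction_nondegenerate_general T hTsymm1 hTsymm2 ν ξ B hBsymm hBξ hfact ω hω v hv0 hvrad
end

section
/- Let V be a real vector space of finite dimension n ≥ 2, T : V × V × V → ℝ a symmetric trilinear form, ν : V → ℝ a linear form, and ξ a quadratic form on V such that T(x,x,x) = ν(x)·ξ(x) for all x ∈ V. Suppose there exists L₁ ∈ V with T(L₁,L₁,L₁) > 0 and ν(L₁) > 0, and suppose there exists a subspace W ⊆ V of dimension n − 1 such that T(L₁,w,w) < 0 for every nonzero w ∈ W. Then ξ(L₁) > 0, and there exists a subspace W′ ⊆ V of dimension at least n − 2 such that ξ(w) < 0 for every nonzero w ∈ W′. (Consequently the signature of ξ is (2,0,n−2), (1,1,n−2) or (1,0,n−1).) -/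
/-- Hodge-index-type consequence for the quadratic factor of a cubic form: if
`T(x,x,x) = ν(x)·ξ(x)`, `T(L₁,L₁,L₁) > 0`, `ν(L₁) > 0`, and `T(L₁,·,·)` is negative
on a hyperplane `W`, then `ξ(L₁) > 0` and `ξ` is negative on a subspace of
dimension at least `n - 2`. -/
theorem quadratic_factor_signature {V : Type*} [AddCommGroup V] [Module ℝ V]
    [FiniteDimensional ℝ V]
    (n : ℕ) (hn : 2 ≤ n) (hdim : Module.finrank ℝ V = n)
    (T : V →ₗ[ℝ] V →ₗ[ℝ] V →ₗ[ℝ] ℝ)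
    (hTsymm1 : ∀ x y z : V, T x y z = T y x z)
    (hTsymm2 : ∀ x y z : V, T x y z = T x z y)
    (ν : V →ₗ[ℝ] ℝ) (ξ : QuadraticForm ℝ V)
    (hfact : ∀ x : V, T x x x = ν x * ξ x)
    (L₁ : V) (hL₁pos : 0 < T L₁ L₁ L₁) (hνL₁ : 0 < ν L₁)
    (W : Submodule ℝ V) (hW : Module.finrank ℝ W = n - 1)
    (hWneg : ∀ w ∈ W, w ≠ 0 → T L₁ w w < 0) :
    0 < ξ L₁ ∧
      ∃ W' : Submodule ℝ V, n - 2 ≤ Module.finrank ℝ W' ∧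
        ∀ w ∈ W', w ≠ 0 → ξ w < 0 := by
  have hξL₁ : 0 < ξ L₁ := by
    have h := hfact L₁
    nlinarith
  refine ⟨hξL₁, W ⊓ LinearMap.ker ν, ?_, ?_⟩
  · -- dimension count
    have hνsurj : LinearMap.range ν = ⊤ := by
      rw [LinearMap.range_eq_top]
      intro c
      refine ⟨(c / ν L₁) • L₁, ?_⟩
      simp [div_mul_cancel₀, hνL₁.ne']
    have hker : Module.finrank ℝ (LinearMap.ker ν) = n - 1 := by
      have h := LinearMap.finrank_range_add_finrank_ker ν
      rw [hνsurj, hdim] at h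
      rw [finrank_top, Module.finrank_self] at h
      omega
    have hsup := Submodule.finrank_sup_add_finrank_inf_eq W (LinearMap.ker ν)
    have hle : Module.finrank ℝ ↥(W ⊔ LinearMap.ker ν) ≤ n := by
      rw [← hdim]; exact Submodule.finrank_le _
    rw [hW, hker] at hsup
    omega
  · intro w hw hwne
    obtain ⟨hwW, hwker⟩ := hw
    have hνw : ν w = 0 := hwker
    have hTneg : T L₁ w w < 0 := hWneg w hwW hwne
    -- expand T (L₁ ± w) (L₁ ± w) (L₁ ± w)
    have hp := hfact (L₁ + w)
    have hm := hfact (L₁ - w)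
    simp only [map_add, map_sub, LinearMap.add_apply, LinearMap.sub_apply, hνw, add_zero,
      sub_zero] at hp hm
    -- symmetry normalizations
    have s1 : T w L₁ L₁ = T L₁ L₁ w := by rw [hTsymm1, hTsymm2]
    have s2 : T L₁ w L₁ = T L₁ L₁ w := by rw [hTsymm2]
    have s3 : T w L₁ w = T L₁ w w := by rw [hTsymm1]
    have s4 : T w w L₁ = T L₁ w w := by rw [hTsymm2, hTsymm1]
    -- parallelogram law for ξ
    have hpar : ξ (L₁ + w) + ξ (L₁ - w) = 2 * ξ L₁ + 2 * ξ w := by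
      have e1 : QuadraticMap.polar ξ L₁ (-w) = -QuadraticMap.polar ξ L₁ w :=
        QuadraticMap.polar_neg_right ξ L₁ w
      have e2 : ξ (-w) = ξ w := QuadraticMap.map_neg ξ w
      simp only [QuadraticMap.polar, ← sub_eq_add_neg] at e1
      rw [e2] at e1
      linarith
    have hTw : T w w w = ν w * ξ w := hfact w
    rw [hνw, zero_mul] at hTw
    -- adding the expansions: 2 T L₁ L₁ L₁ + 6 T L₁ w w = ν L₁ * (2 ξ L₁ + 2 ξ w)
    have hL₁eq := hfact L₁
    have hsum : 2 * T L₁ L₁ L₁ + 6 * T L₁ w w = ν L₁ * (ξ (L₁ + w) + ξ (L₁ - w)) := by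
      rw [mul_add]; linarith
    rw [hpar] at hsum
    have key : ν L₁ * ξ w = 3 * T L₁ w w := by linear_combination hL₁eq - hsum / 2
    by_contra h
    push_neg at h
    have := mul_nonneg hνL₁.le h
    linarith
end

section
/- Let V be a finite-dimensional real vector space, T : V × V × V → ℝ a symmetric trilinear form, ν : V → ℝ a linear form, and ξ a quadratic form on V with associated symmetric bilinear form B, such that T(x,x,x) = ν(x)·ξ(x) for all x ∈ V. If v ∈ V satisfies ν(v) = 0 and B(v,y) = 0 for all y ∈ V, then T(v,y,z) = 0 for all y, z ∈ V. -/
/-- If a symmetric trilinear form `T` factors as `T(x,x,x) = ν(x)·ξ(x)` with `B` the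
symmetric bilinear form associated to the quadratic form `ξ`, then any `v` with
`ν(v) = 0` lying in the radical of `B` satisfies `T(v,y,z) = 0` for all `y, z`. -/
theorem trilinear_vanishes_on_radical {V : Type*} [AddCommGroup V] [Module ℝ V]
    [FiniteDimensional ℝ V]
    (T : V →ₗ[ℝ] V →ₗ[ℝ] V →ₗ[ℝ] ℝ)
    (hTsymm1 : ∀ x y z : V, T x y z = T y x z)
    (hTsymm2 : ∀ x y z : V, T x y z = T x z y)
    (ν : V →ₗ[ℝ] ℝ) (ξ : QuadraticForm ℝ V) (B : LinearMap.BilinForm ℝ V)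
    (hBsymm : ∀ x y : V, B x y = B y x)
    (hBξ : ∀ x : V, B x x = ξ x)
    (hfact : ∀ x : V, T x x x = ν x * ξ x)
    (v : V) (hvν : ν v = 0) (hvrad : ∀ y : V, B v y = 0) :
    ∀ y z : V, T v y z = 0 := by
  have hT3 : ∀ x : V, T x x x = ν x * B x x := by
    intro x; rw [hfact, hBξ]
  have key : ∀ y : V, T v y y = 0 := by
    intro y
    have e0 := hT3 v
    have e1 := hT3 (v + y)
    have e2 := hT3 (v - y)
    simp only [map_add, map_sub, LinearMap.add_apply, LinearMap.sub_apply,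
      hvν, hvrad, hBsymm y v, hvrad y] at e0 e1 e2
    rw [hTsymm2 y y v, hTsymm1 y v y] at e1 e2
    nlinarith [e0, e1, e2]
  intro y z
  have h := key (y + z)
  simp only [map_add, LinearMap.add_apply, key y, key z] at h
  rw [hTsymm2 v z y] at h
  linarith
end

section
/- Let V be a real vector space of finite dimension n > 3 and T : V × V × V → ℝ a symmetric trilinear form such that there exists ω ∈ V for which the bilinear form (y,z) ↦ T(ω,y,z) is nondegenerate. Then there do not exist linear forms ℓ₁, ℓ₂, ℓ₃ : V → ℝ with T(x,x,x) = ℓ₁(x)·ℓ₂(x)·ℓ₃(x) for all x ∈ V. -/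
/-- If `dim V > 3` and the symmetric trilinear form `T` has `T(ω,·,·)` nondegenerate for
some `ω`, then the cubic form `T(x,x,x)` is not a product of three linear forms. -/
theorem cubic_not_product_of_linear_forms {V : Type*} [AddCommGroup V] [Module ℝ V]
    [FiniteDimensional ℝ V]
    (hdim : 3 < Module.finrank ℝ V)
    (T : V →ₗ[ℝ] V →ₗ[ℝ] V →ₗ[ℝ] ℝ)
    (hTsymm1 : ∀ x y z : V, T x y z = T y x z)
    (hTsymm2 : ∀ x y z : V, T x y z = T x z y)
    (ω : V) (hω : ∀ v : V, (∀ y : V, T ω v y = 0) → v = 0) :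
    ¬ ∃ l₁ l₂ l₃ : V →ₗ[ℝ] ℝ, ∀ x : V, T x x x = l₁ x * l₂ x * l₃ x := by
  rintro ⟨l₁, l₂, l₃, h⟩
  -- the common kernel of l₁, l₂, l₃ contains a nonzero vector
  set f : V →ₗ[ℝ] ℝ × ℝ × ℝ := l₁.prod (l₂.prod l₃) with hf
  have hninj : ¬ Function.Injective f := by
    intro hinj
    have h1 := LinearMap.finrank_le_finrank_of_injective hinj
    have h3 : Module.finrank ℝ (ℝ × ℝ × ℝ) = 3 := by
      simp [Module.finrank_prod]
    omega
  obtain ⟨a, b, hab, hne⟩ := Function.not_injective_iff.mp hninj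
  set v := a - b with hvdef
  have hv0 : v ≠ 0 := sub_ne_zero.mpr hne
  have hfv : f v = 0 := by
    rw [hvdef, map_sub, hab, sub_self]
  have hl1 : l₁ v = 0 := congrArg Prod.fst hfv
  have hl2 : l₂ v = 0 := congrArg (fun p => p.2.1) hfv
  have hl3 : l₃ v = 0 := congrArg (fun p => p.2.2) hfv
  -- key: T v x x = 0 for all x
  have key : ∀ x : V, T v x x = 0 := by
    intro x
    have e : ∀ t : ℝ, t * (3 * T v x x) + t ^ 2 * (3 * T v v x) + t ^ 3 * T v v v = 0 := by
      intro t
      have h1 := h (x + t • v)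
      have h2 := h x
      simp only [map_add, map_smul, LinearMap.add_apply, LinearMap.smul_apply,
        smul_eq_mul, hl1, hl2, hl3, mul_zero, add_zero] at h1
      have hs1 : T x x v = T v x x := by rw [hTsymm2, hTsymm1]
      have hs2 : T x v x = T v x x := by rw [hTsymm1]
      have hs3 : T x v v = T v v x := by rw [hTsymm1, hTsymm2]
      have hs4 : T v x v = T v v x := by rw [hTsymm2]
      rw [hs1, hs2, hs3, hs4] at h1
      linear_combination h1 - h2
    have e1 := e 1
    have e2 := e (-1)
    have e3 := e 2
    nlinarith [e1, e2, e3]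
  -- polarize: T v y z = 0 for all y, hence T ω v y = 0
  have hvz : v = 0 := by
    apply hω
    intro y
    have hp := key (ω + y)
    have h1 := key ω
    have h2 := key y
    have hs : T v y ω = T v ω y := by rw [hTsymm2]
    simp only [map_add, LinearMap.add_apply] at hp
    rw [hTsymm1]
    linarith [hp, h1, h2, hs]
  exact hv0 hvz
end

section
/- Let V be a finite-dimensional real vector space, ν : V → ℝ a linear form, and ξ a quadratic form on V which has no linear factor, i.e. there exist no linear forms ℓ, ℓ′ : V → ℝ with ℓ ≠ 0 and ξ(x) = ℓ(x)·ℓ′(x) for all x. Let g : V → V be a linear automorphism such that ν(g(x))·ξ(g(x)) = ν(x)·ξ(x) for all x ∈ V, and suppose there exists x₀ ∈ V with g(x₀) = x₀ and ν(x₀) ≠ 0. Then ν(g(x)) = ν(x) and ξ(g(x)) = ξ(x) for all x ∈ V. -/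
/-! If `ν ∘ g ≠ ν`, then, since `g` fixes `x₀` and `ν x₀ ≠ 0`, `ν ∘ g` is not a multiple of `ν`
and so does not vanish on `ker ν`. Restricting `(ν ∘ g) (ξ ∘ g) = ν ξ` to lines in `ker ν` then
forces `ξ ∘ g` to vanish on the hyperplane `ker ν`; a quadratic form vanishing on `ker ν` is
divisible by `ν`, so `ξ` would have the linear factor `ν ∘ g⁻¹`. Hence `ν ∘ g = ν`, and cancelling
`ν` gives `ξ ∘ g = ξ` off `ker ν`, hence everywhere by restricting to lines again. -/

open QuadraticMap LinearMap

namespace QuadraticMap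

variable {K V : Type*} [Field K] [AddCommGroup V] [Module K V]

theorem map_add_smul (q : QuadraticForm K V) (x y : V) (t : K) :
    q (x + t • y) = q x + t * polar q x y + t ^ 2 * q y := by
  rw [QuadraticMap.map_add q, QuadraticMap.map_smul, polar_smul_right, smul_eq_mul, smul_eq_mul]
  ring

theorem eq_zero_of_map_add_smul_eq_zero [CharZero K] (q : QuadraticForm K V) {x y : V} {s : K}
    (h : ∀ t ≠ s, q (x + t • y) = 0) : q x = 0 := by
  -- `t ↦ q (x + t • y)` has degree at most two; interpolate it at `s + 1`, `s + 2`, `s + 3`.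
  have h₁ := h (s + 1) (by simp)
  have h₂ := h (s + 2) (by simp)
  have h₃ := h (s + 3) (by norm_num)
  rw [map_add_smul] at h₁ h₂ h₃
  linear_combination ((s + 2) * (s + 3) / 2) * h₁ - (s + 1) * (s + 3) * h₂
    + ((s + 1) * (s + 2) / 2) * h₃

theorem eq_zero_of_forall_apply_ne_zero [CharZero K] {q : QuadraticForm K V} {ν : V →ₗ[K] K}
    {x₀ : V} (hx₀ : ν x₀ ≠ 0) (h : ∀ x, ν x ≠ 0 → q x = 0) : q = 0 := by
  ext x
  refine q.eq_zero_of_map_add_smul_eq_zero (y := x₀) (s := -ν x / ν x₀) fun t ht ↦ h _ ?_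
  rw [map_add, map_smul, smul_eq_mul]
  contrapose! ht
  field_simp
  linear_combination ht

theorem exists_eq_mul_of_ker_le {q : QuadraticForm K V} {μ : V →ₗ[K] K} (hμ : μ ≠ 0)
    (h : ∀ x ∈ ker μ, q x = 0) : ∃ l : V →ₗ[K] K, ∀ x, q x = μ x * l x := by
  obtain ⟨v, hv⟩ : ∃ v, μ v = 1 := μ.surjective_of_ne_zero hμ 1
  refine ⟨(polarBilin q).flip v - q v • μ, fun x ↦ ?_⟩
  have hx : x - μ x • v ∈ ker μ := by simp [hv]
  have := q.map_add_smul (x - μ x • v) v (μ x)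
  rw [sub_add_cancel, h _ hx, polar_sub_left, polar_smul_left, polar_self] at this
  simp only [LinearMap.sub_apply, LinearMap.smul_apply, flip_apply, polarBilin_apply_apply,
    smul_eq_mul, this]
  ring

theorem eq_zero_on_ker_of_mul_eq_mul [CharZero K] {ν ν' : V →ₗ[K] K} {ξ ξ' : QuadraticForm K V}
    (h : ∀ x, ν' x * ξ' x = ν x * ξ x) (hker : ¬ ker ν ≤ ker ν') :
    ∀ x ∈ ker ν, ξ' x = 0 := by
  obtain ⟨y, hy, hy'⟩ := SetLike.not_le_iff_exists.mp hker
  rw [mem_ker] at hy hy'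
  intro x hx
  rw [mem_ker] at hx
  refine ξ'.eq_zero_of_map_add_smul_eq_zero (y := y) (s := -ν' x / ν' y) fun t ht ↦ ?_
  have hν : ν (x + t • y) = 0 := by simp [hx, hy]
  have hν' : ν' (x + t • y) ≠ 0 := by
    rw [map_add, map_smul, smul_eq_mul]
    contrapose! ht
    field_simp
    linear_combination ht
  exact (mul_eq_zero.mp (by rw [h, hν, zero_mul])).resolve_left hν'

end QuadraticMap

theorem LinearMap.eq_of_ker_le_of_apply_eq {K V : Type*} [Field K] [AddCommGroup V] [Module K V]
    {f g : V →ₗ[K] K} (h : ker f ≤ ker g) {x₀ : V} (h₀ : g x₀ = f x₀) (hx₀ : f x₀ ≠ 0) :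
    g = f := by
  ext x
  have hx : x - (f x / f x₀) • x₀ ∈ ker f := by
    rw [mem_ker, map_sub, map_smul, smul_eq_mul, div_mul_cancel₀ _ hx₀, sub_self]
  have := h hx
  rwa [mem_ker, map_sub, map_smul, smul_eq_mul, h₀, div_mul_cancel₀ _ hx₀, sub_eq_zero] at this

theorem automorphism_preserves_factors_general {V : Type*} [AddCommGroup V] [Module ℝ V]
    (ν : V →ₗ[ℝ] ℝ) (ξ : QuadraticForm ℝ V)
    (hirr : ¬ ∃ l l' : V →ₗ[ℝ] ℝ, l ≠ 0 ∧ ∀ x : V, ξ x = l x * l' x)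
    (g : V ≃ₗ[ℝ] V)
    (hg : ∀ x : V, ν (g x) * ξ (g x) = ν x * ξ x)
    (x₀ : V) (hfix : g x₀ = x₀) (hx₀ : ν x₀ ≠ 0) :
    ∀ x : V, ν (g x) = ν x ∧ ξ (g x) = ξ x := by
  have hker : ker ν ≤ ker (ν ∘ₗ g.toLinearMap) := by
    by_contra hker
    have hν₀ : ν ≠ 0 := fun h ↦ hx₀ (by simp [h])
    obtain ⟨l, hl⟩ := (ξ.comp g.toLinearMap).exists_eq_mul_of_ker_le hν₀
      (eq_zero_on_ker_of_mul_eq_mul (ξ' := ξ.comp g.toLinearMap) hg hker)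
    refine hirr ⟨ν ∘ₗ g.symm.toLinearMap, l ∘ₗ g.symm.toLinearMap, fun h ↦ hx₀ ?_,
      fun x ↦ by simpa using hl (g.symm x)⟩
    simpa [g.symm_apply_eq.mpr hfix.symm] using LinearMap.congr_fun h x₀
  have hν (x : V) : ν (g x) = ν x :=
    LinearMap.congr_fun (eq_of_ker_le_of_apply_eq hker (by simp [hfix]) hx₀) x
  have hξ : ξ.comp g.toLinearMap - ξ = 0 := by
    refine eq_zero_of_forall_apply_ne_zero hx₀ fun x hx ↦ ?_
    have := hg x
    rw [hν] at this
    simpa [sub_eq_zero] using mul_left_cancel₀ hx this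
  intro x
  exact ⟨hν x, sub_eq_zero.mp (by simpa using congr($hξ x))⟩

/-- A linear automorphism preserving the cubic form `ν·ξ`, where `ξ` has no linear
factor, and fixing a vector on which `ν` does not vanish, preserves both `ν` and `ξ`. -/
theorem automorphism_preserves_factors {V : Type*} [AddCommGroup V] [Module ℝ V]
    [FiniteDimensional ℝ V]
    (ν : V →ₗ[ℝ] ℝ) (ξ : QuadraticForm ℝ V)
    (hirr : ¬ ∃ l l' : V →ₗ[ℝ] ℝ, l ≠ 0 ∧ ∀ x : V, ξ x = l x * l' x)
    (g : V ≃ₗ[ℝ] V)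
    (hg : ∀ x : V, ν (g x) * ξ (g x) = ν x * ξ x)
    (x₀ : V) (hfix : g x₀ = x₀) (hx₀ : ν x₀ ≠ 0) :
    ∀ x : V, ν (g x) = ν x ∧ ξ (g x) = ξ x :=
  automorphism_preserves_factors_general ν ξ hirr g hg x₀ hfix hx₀
end
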